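/- Let φ = (φ_i)_{i≥1} be a sequence of real numbers with φ_i = 0 for all i ≥ K+1, where K is a positive integer. Then for every n ≥ K, the number of real zeros of Be_n^φ (counted with multiplicity) is at least n−K+1 if K is odd, and at least n−K if K is even. -/

import Mathlib

open Polynomial

/-- The Bell polynomials: `Bell 0 = 1`, `Bell (n+1) = x·(Bell n + (Bell n)')`. -/
noncomputable def Bell : ℕ → Polynomial ℝ
  | 0 => 1
  | n + 1 => X * (Bell n + derivative (Bell n))

/-- `Phi φ n i` is the elementary symmetric polynomial of degree `i` in `φ 1, …, φ n`. -/
noncomputable def Phi (φ : ℕ → ℝ) (n i : ℕ) : ℝ :=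
  ∑ s ∈ Finset.powersetCard i (Finset.Icc 1 n), ∏ j ∈ s, φ j

/-- The generalized Bell polynomial `Be_n^φ = ∑_{j=0}^n Φ^n_{n-j} Be_j`. -/
noncomputable def genBell (φ : ℕ → ℝ) (n : ℕ) : Polynomial ℝ :=
  ∑ j ∈ Finset.range (n + 1), C (Phi φ n (n - j)) * Bell j

/-- The sequence `φ^{{l}}` obtained from `φ` by removing its `l`-th term
(sequences indexed from 1). -/
def removeIdx (φ : ℕ → ℝ) (l : ℕ) (i : ℕ) : ℝ := if i < l then φ i else φ (i + 1)

/-- The sequence `φ^{l,M}`, obtained by adding `M` to the `l`-th term of `φ`. -/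
def addAt (φ : ℕ → ℝ) (l : ℕ) (M : ℝ) (i : ℕ) : ℝ := φ i + if i = l then M else 0

/-- A finite set `U` of reals interlaces a finite set `V` if between any two consecutive
elements of `U` there lies exactly one element of `V`, and either `|U| = |V| + 1`, or
`|U| = |V|` and `max U < max V`. -/
def Interlaces (U V : Finset ℝ) : Prop :=
  (∀ u₁ ∈ U, ∀ u₂ ∈ U, u₁ < u₂ → (∀ u ∈ U, ¬(u₁ < u ∧ u < u₂)) →
    ∃! v, v ∈ V ∧ u₁ < v ∧ v < u₂) ∧
  (U.card = V.card + 1 ∨ (U.card = V.card ∧ U.max < V.max))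

/-- `zeta φ n k` is the `k`-th zero (in increasing order, `k` counted from 1) of the
generalized Bell polynomial `Be_n^φ`. -/
noncomputable def zeta (φ : ℕ → ℝ) (n k : ℕ) : ℝ :=
  ((genBell φ n).roots.toFinset.sort (· ≤ ·)).getD (k - 1) 0


section Aux
open Topology Set Filter

open Polynomial Filter Set Topology

/-- `eval x p * exp x → 0` as `x → -∞`. -/
lemma tendsto_eval_mul_exp_atBot (p : ℝ[X]) :
    Tendsto (fun x => p.eval x * Real.exp x) atBot (𝓝 0) := by
  have h1 : Tendsto (fun y => (p.comp (-X)).eval y / Real.exp y) atTop (𝓝 0) :=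
    Polynomial.tendsto_div_exp_atTop _
  have h2 : Tendsto (fun x : ℝ => -x) atBot atTop := tendsto_neg_atBot_atTop
  have := h1.comp h2
  convert this using 2 with x
  simp [Function.comp, eval_comp, Real.exp_neg, div_inv_eq_mul]

/-- Rolle "at -infinity": if `p > 0` strictly below `u` and `p u = 0` then
`p + p'` has a root below `u`. -/
lemma exists_add_deriv_root_lt_of_pos (p : ℝ[X]) (u : ℝ) (hu : p.eval u = 0)
    (hpos : ∀ x, x < u → 0 < p.eval x) :
    ∃ z, z < u ∧ (p + derivative p).eval z = 0 := by
  set g : ℝ → ℝ := fun x => p.eval x * Real.exp x with hg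
  have hgd : ∀ x : ℝ, HasDerivAt g ((p + derivative p).eval x * Real.exp x) x := by
    intro x
    have : HasDerivAt (fun x => p.eval x * Real.exp x)
        (eval x (derivative p) * Real.exp x + eval x p * Real.exp x) x :=
      (p.hasDerivAt x).mul (Real.hasDerivAt_exp x)
    convert this using 1
    simp [eval_add]
    ring
  have hcont : Continuous g :=
    (p.continuous_aeval.mul Real.continuous_exp)
  have ha : 0 < g (u - 1) := by
    have := hpos (u - 1) (by linarith)
    positivity
  obtain ⟨b, hb1, hb2⟩ : ∃ b, g b < g (u - 1) ∧ b < u - 1 := by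
    have h1 : ∀ᶠ x in atBot, g x < g (u - 1) :=
      (tendsto_eval_mul_exp_atBot p).eventually (Iio_mem_nhds ha)
    exact ((h1.and (eventually_lt_atBot (u - 1))).exists)
  obtain ⟨c, hc, hmax⟩ := (isCompact_Icc (a := b) (b := u)).exists_isMaxOn
    (Set.nonempty_Icc.2 (by linarith)) hcont.continuousOn
  have hac : g (u - 1) ≤ g c := hmax (Set.mem_Icc.2 ⟨by linarith, by linarith⟩)
  have hcb : b < c := by
    rcases lt_or_eq_of_le (Set.mem_Icc.1 hc).1 with h | h
    · exact h
    · exfalso; rw [← h] at hac; linarith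
  have hcu : c < u := by
    rcases lt_or_eq_of_le (Set.mem_Icc.1 hc).2 with h | h
    · exact h
    · exfalso
      have : g u = 0 := by simp [hg, hu]
      rw [h, this] at hac; linarith
  have hloc : IsLocalMax g c := hmax.isLocalMax (Icc_mem_nhds hcb hcu)
  have := hloc.hasDerivAt_eq_zero (hgd c)
  refine ⟨c, hcu, ?_⟩
  have hexp : Real.exp c ≠ 0 := (Real.exp_pos c).ne'
  exact (mul_eq_zero.1 this).resolve_right hexp

/-- Same without the sign assumption: only that `p` has no root below `u`. -/
lemma exists_add_deriv_root_lt (p : ℝ[X]) (u : ℝ) (hu : p.eval u = 0)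
    (hne : ∀ x, x < u → p.eval x ≠ 0) :
    ∃ z, z < u ∧ (p + derivative p).eval z = 0 := by
  have hsign : (∀ x, x < u → 0 < p.eval x) ∨ (∀ x, x < u → p.eval x < 0) := by
    rcases lt_or_gt_of_ne (hne (u - 1) (by linarith)) with h | h
    · right
      intro x hx
      rcases lt_or_gt_of_ne (hne x hx) with h' | h'
      · exact h'
      · exfalso
        rcases le_or_gt x (u - 1) with hxl | hxl
        · obtain ⟨c, hcmem, hc⟩ := intermediate_value_Icc' hxl p.continuousOn
            (Set.mem_Icc.2 ⟨h.le, h'.le⟩)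
          exact hne c (by rcases Set.mem_Icc.1 hcmem with ⟨_, h2⟩; linarith) hc
        · obtain ⟨c, hcmem, hc⟩ := intermediate_value_Icc hxl.le p.continuousOn
            (Set.mem_Icc.2 ⟨h.le, h'.le⟩)
          exact hne c (by rcases Set.mem_Icc.1 hcmem with ⟨_, h2⟩; linarith) hc
    · left
      intro x hx
      rcases lt_or_gt_of_ne (hne x hx) with h' | h'
      · exfalso
        rcases le_or_gt x (u - 1) with hxl | hxl
        · obtain ⟨c, hcmem, hc⟩ := intermediate_value_Icc hxl p.continuousOn
            (Set.mem_Icc.2 ⟨h'.le, h.le⟩)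
          exact hne c (by rcases Set.mem_Icc.1 hcmem with ⟨_, h2⟩; linarith) hc
        · obtain ⟨c, hcmem, hc⟩ := intermediate_value_Icc' hxl.le p.continuousOn
            (Set.mem_Icc.2 ⟨h'.le, h.le⟩)
          exact hne c (by rcases Set.mem_Icc.1 hcmem with ⟨_, h2⟩; linarith) hc
      · exact h'
  rcases hsign with hs | hs
  · exact exists_add_deriv_root_lt_of_pos p u hu hs
  · obtain ⟨z, hz1, hz2⟩ := exists_add_deriv_root_lt_of_pos (-p) u (by simp [hu])
      (fun x hx => by simpa using (hs x hx))
    refine ⟨z, hz1, ?_⟩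
    simp only [derivative_neg, eval_add, eval_neg] at hz2 ⊢
    linarith

lemma hasDerivAt_eval_mul_exp (p : ℝ[X]) (x : ℝ) :
    HasDerivAt (fun x => p.eval x * Real.exp x) ((p + derivative p).eval x * Real.exp x) x := by
  have : HasDerivAt (fun x => p.eval x * Real.exp x)
      (eval x (derivative p) * Real.exp x + eval x p * Real.exp x) x :=
    (p.hasDerivAt x).mul (Real.hasDerivAt_exp x)
  convert this using 1
  simp [eval_add]
  ring

lemma add_derivative_ne_zero {p : ℝ[X]} (hp : p ≠ 0) : p + derivative p ≠ 0 := by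
  rcases eq_or_ne (derivative p) 0 with h | h
  · simpa [h] using hp
  · have hdeg : (derivative p).degree < p.degree := degree_derivative_lt hp
    have : (p + derivative p).degree = p.degree := by
      rw [add_comm]; exact degree_add_eq_right_of_degree_lt hdeg
    intro hc
    rw [hc, degree_zero] at this
    exact hp (degree_eq_bot.1 this.symm)

lemma key_exists (p : ℝ[X]) (hp : p ≠ 0) {u : ℝ} (hu : u ∈ p.roots.toFinset) :
    ∃ v, v ∈ (p + derivative p).roots.toFinset \ p.roots.toFinset ∧ v < u ∧
      ∀ w ∈ p.roots.toFinset, w < u → w < v := by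
  have hq : p + derivative p ≠ 0 := add_derivative_ne_zero hp
  have hueval : p.eval u = 0 := by
    rw [Multiset.mem_toFinset, mem_roots hp] at hu; exact hu
  set sb := p.roots.toFinset.filter (· < u) with hsbdef
  have hmem_t : ∀ c : ℝ, (p + derivative p).eval c = 0 → p.eval c ≠ 0 →
      c ∈ (p + derivative p).roots.toFinset \ p.roots.toFinset := by
    intro c h1 h2
    rw [Finset.mem_sdiff, Multiset.mem_toFinset, Multiset.mem_toFinset, mem_roots hq,
      mem_roots hp]
    exact ⟨h1, h2⟩
  by_cases hsb : sb.Nonempty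
  · set u' := sb.max' hsb with hu'def
    have hu'mem : u' ∈ sb := sb.max'_mem hsb
    have hu'root : p.eval u' = 0 := by
      have := (Finset.mem_filter.1 hu'mem).1
      rw [Multiset.mem_toFinset, mem_roots hp] at this; exact this
    have hu'lt : u' < u := by
      have := (Finset.mem_filter.1 hu'mem).2; simpa using this
    obtain ⟨c, hcmem, hc0⟩ := exists_hasDerivAt_eq_zero
      (f := fun x => p.eval x * Real.exp x)
      (f' := fun x => (p + derivative p).eval x * Real.exp x) hu'lt
      ((p.continuous_aeval.mul Real.continuous_exp).continuousOn)
      (by simp [hu'root, hueval])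
      (fun x _ => hasDerivAt_eval_mul_exp p x)
    have hc1 : (p + derivative p).eval c = 0 :=
      (mul_eq_zero.1 hc0).resolve_right (Real.exp_pos c).ne'
    have hcnr : p.eval c ≠ 0 := by
      intro h
      have hcsb : c ∈ sb := by
        rw [hsbdef, Finset.mem_filter, Multiset.mem_toFinset, mem_roots hp]
        exact ⟨h, by simpa using hcmem.2⟩
      have := sb.le_max' c hcsb
      exact absurd hcmem.1 (not_lt.2 this)
    refine ⟨c, hmem_t c hc1 hcnr, hcmem.2, fun w hw hwu => ?_⟩
    have hwsb : w ∈ sb := by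
      rw [hsbdef, Finset.mem_filter]; exact ⟨hw, by simpa using hwu⟩
    exact lt_of_le_of_lt (sb.le_max' w hwsb) hcmem.1
  · have hne : ∀ x, x < u → p.eval x ≠ 0 := by
      intro x hx h
      exact hsb ⟨x, by
        rw [hsbdef, Finset.mem_filter, Multiset.mem_toFinset, mem_roots hp]
        exact ⟨h, by simpa using hx⟩⟩
    obtain ⟨z, hz1, hz2⟩ := exists_add_deriv_root_lt p u hueval hne
    refine ⟨z, hmem_t z hz2 (hne z hz1), hz1, fun w hw hwu => ?_⟩
    exact absurd (hne w (by simpa using hwu)) (by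
      rw [Multiset.mem_toFinset, mem_roots hp] at hw
      simpa using hw)

lemma card_roots_toFinset_le_add_derivative (p : ℝ[X]) (hp : p ≠ 0) :
    p.roots.toFinset.card ≤
      ((p + derivative p).roots.toFinset \ p.roots.toFinset).card := by
  classical
  set f : ℝ → ℝ := fun u => if h : u ∈ p.roots.toFinset then (key_exists p hp h).choose else 0
    with hfdef
  have hspec : ∀ u (h : u ∈ p.roots.toFinset),
      f u ∈ (p + derivative p).roots.toFinset \ p.roots.toFinset ∧ f u < u ∧
        ∀ w ∈ p.roots.toFinset, w < u → w < f u := by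
    intro u h
    have hfu : f u = (key_exists p hp h).choose := dif_pos h
    rw [hfu]
    exact (key_exists p hp h).choose_spec
  refine Finset.card_le_card_of_injOn f (fun u hu => (hspec u hu).1) ?_
  intro u₁ h₁ u₂ h₂ heq
  by_contra hne
  rcases lt_or_gt_of_ne hne with hlt | hlt
  · have h1 := (hspec u₂ h₂).2.2 u₁ h₁ hlt
    have h2 := (hspec u₁ h₁).2.1
    rw [heq] at h2; linarith
  · have h1 := (hspec u₁ h₁).2.2 u₂ h₂ hlt
    have h2 := (hspec u₂ h₂).2.1
    rw [heq] at h1; linarith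

lemma rootMultiplicity_sub_one_le_add_derivative (p : ℝ[X]) (hp : p ≠ 0) (t : ℝ) :
    p.rootMultiplicity t - 1 ≤ (p + derivative p).rootMultiplicity t := by
  rw [le_rootMultiplicity_iff (add_derivative_ne_zero hp)]
  exact dvd_add (dvd_trans (pow_dvd_pow _ (Nat.sub_le _ _)) (p.pow_rootMultiplicity_dvd t))
    (pow_sub_one_dvd_derivative_of_pow_dvd (p.pow_rootMultiplicity_dvd t))

lemma card_roots_le_add_derivative (p : ℝ[X]) (hp : p ≠ 0) :
    Multiset.card p.roots ≤ Multiset.card (p + derivative p).roots := by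
  have hq : p + derivative p ≠ 0 := add_derivative_ne_zero hp
  calc
    Multiset.card p.roots = ∑ x ∈ p.roots.toFinset, p.roots.count x :=
      (Multiset.toFinset_sum_count_eq _).symm
    _ = ∑ x ∈ p.roots.toFinset, (p.roots.count x - 1 + 1) :=
      (Eq.symm <| Finset.sum_congr rfl fun _ hx => tsub_add_cancel_of_le <|
        Nat.succ_le_iff.2 <| Multiset.count_pos.2 <| Multiset.mem_toFinset.1 hx)
    _ = (∑ x ∈ p.roots.toFinset, (p.rootMultiplicity x - 1)) + p.roots.toFinset.card := by
      simp only [Finset.sum_add_distrib, Finset.card_eq_sum_ones, count_roots]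
    _ ≤ (∑ x ∈ p.roots.toFinset, (p + derivative p).rootMultiplicity x) +
          ((p + derivative p).roots.toFinset \ p.roots.toFinset).card :=
      add_le_add
        (Finset.sum_le_sum fun x _ => rootMultiplicity_sub_one_le_add_derivative p hp x)
        (card_roots_toFinset_le_add_derivative p hp)
    _ ≤ (∑ x ∈ p.roots.toFinset, (p + derivative p).roots.count x) +
          (∑ x ∈ (p + derivative p).roots.toFinset \ p.roots.toFinset,
            (p + derivative p).roots.count x) := by
      simp only [← count_roots]
      refine add_le_add_right ((Finset.card_eq_sum_ones _).trans_le ?_) _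
      refine Finset.sum_le_sum fun x hx => Nat.succ_le_iff.2 ?_
      rw [Multiset.count_pos, ← Multiset.mem_toFinset]
      exact (Finset.mem_sdiff.1 hx).1
    _ = Multiset.card (p + derivative p).roots := by
      rw [← Finset.sum_union Finset.disjoint_sdiff, Finset.union_sdiff_self_eq_union,
        ← Multiset.toFinset_sum_count_eq, ← Finset.sum_subset Finset.subset_union_right]
      intro x _ hx₂
      simpa only [Multiset.mem_toFinset, Multiset.count_eq_zero] using hx₂

end Aux

lemma Bell_monic_natDegree (n : ℕ) : (Bell n).Monic ∧ (Bell n).natDegree = n := by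
  induction n with
  | zero => exact ⟨monic_one, natDegree_one⟩
  | succ n ih =>
    have hne : Bell n ≠ 0 := ih.1.ne_zero
    have hdlt : (derivative (Bell n)).degree < (Bell n).degree := degree_derivative_lt hne
    have h1 : (Bell n + derivative (Bell n)).Monic := ih.1.add_of_left hdlt
    have hdeq : (Bell n + derivative (Bell n)).degree = (Bell n).degree :=
      degree_add_eq_left_of_degree_lt hdlt
    constructor
    · show (X * (Bell n + derivative (Bell n))).Monic
      exact monic_X.mul h1
    · show (X * (Bell n + derivative (Bell n))).natDegree = n + 1
      rw [natDegree_mul X_ne_zero h1.ne_zero, natDegree_X,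
        natDegree_eq_of_degree_eq hdeq, ih.2, add_comm]

lemma Phi_zero (φ : ℕ → ℝ) (n : ℕ) : Phi φ n 0 = 1 := by
  simp [Phi]

lemma Phi_eq_zero_of_lt (φ : ℕ → ℝ) {n i : ℕ} (h : n < i) : Phi φ n i = 0 := by
  have : (Finset.Icc 1 n).card < i := by
    rw [Nat.card_Icc]; omega
  rw [Phi, Finset.powersetCard_eq_empty.2 this, Finset.sum_empty]

lemma genBell_eq (φ : ℕ → ℝ) (n : ℕ) :
    genBell φ n = Bell n + ∑ j ∈ Finset.range n, C (Phi φ n (n - j)) * Bell j := by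
  rw [genBell, Finset.sum_range_succ, Nat.sub_self, Phi_zero, map_one, one_mul, add_comm]

lemma genBell_monic_natDegree (φ : ℕ → ℝ) (n : ℕ) :
    (genBell φ n).Monic ∧ (genBell φ n).natDegree = n := by
  have hBell := Bell_monic_natDegree n
  have hdegB : (Bell n).degree = (n : WithBot ℕ) := by
    rw [degree_eq_natDegree hBell.1.ne_zero, hBell.2]
  have hlt : (∑ j ∈ Finset.range n, C (Phi φ n (n - j)) * Bell j).degree <
      (Bell n).degree := by
    rw [hdegB]
    refine lt_of_le_of_lt (degree_sum_le _ _) ?_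
    rw [Finset.sup_lt_iff (by exact_mod_cast WithBot.bot_lt_coe n)]
    intro j hj
    have hBj : (Bell j).degree = (j : WithBot ℕ) := by
      rw [degree_eq_natDegree (Bell_monic_natDegree j).1.ne_zero, (Bell_monic_natDegree j).2]
    refine lt_of_le_of_lt (degree_mul_le _ _) ?_
    rw [hBj]
    refine lt_of_le_of_lt (add_le_add_left degree_C_le _) ?_
    rw [zero_add]
    exact_mod_cast Finset.mem_range.1 hj
  constructor
  · rw [genBell_eq]; exact hBell.1.add_of_left hlt
  · rw [genBell_eq, natDegree_eq_of_degree_eq (degree_add_eq_left_of_degree_lt hlt), hBell.2]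

lemma Phi_succ_of_zero (φ : ℕ → ℝ) (n : ℕ) (h : φ (n + 1) = 0) (i : ℕ) :
    Phi φ (n + 1) i = Phi φ n i := by
  classical
  have hnot : (n + 1) ∉ Finset.Icc 1 n := by simp
  have hIcc : Finset.Icc 1 (n + 1) = insert (n + 1) (Finset.Icc 1 n) := by
    rw [← Finset.insert_Icc_right_eq_Icc_add_one (by omega)]
  cases i with
  | zero => simp [Phi]
  | succ i =>
    rw [Phi, Phi, hIcc, Finset.powersetCard_succ_insert hnot, Finset.sum_union, Finset.sum_image]
    · have : ∀ t ∈ Finset.powersetCard i (Finset.Icc 1 n),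
          ∏ j ∈ insert (n + 1) t, φ j = 0 := by
        intro t ht
        have hnt : (n + 1) ∉ t := fun hc =>
          hnot ((Finset.mem_powersetCard.1 ht).1 hc)
        rw [Finset.prod_insert hnt, h, zero_mul]
      rw [Finset.sum_congr rfl this, Finset.sum_const, smul_zero, add_zero]
    · intro t₁ h₁ t₂ h₂ heq
      have hn₁ : (n + 1) ∉ t₁ := fun hc => hnot ((Finset.mem_powersetCard.1 h₁).1 hc)
      have hn₂ : (n + 1) ∉ t₂ := fun hc => hnot ((Finset.mem_powersetCard.1 h₂).1 hc)
      have := congrArg (Finset.erase · (n + 1)) heq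
      simpa [Finset.erase_insert hn₁, Finset.erase_insert hn₂] using this
    · rw [Finset.disjoint_left]
      intro t ht hti
      have hmem : (n + 1) ∈ t := by
        obtain ⟨t', _, rfl⟩ := Finset.mem_image.1 hti
        exact Finset.mem_insert_self _ _
      exact hnot ((Finset.mem_powersetCard.1 ht).1 hmem)

lemma genBell_succ_of_zero (φ : ℕ → ℝ) (n : ℕ) (h : φ (n + 1) = 0) :
    genBell φ (n + 1) = X * (genBell φ n + derivative (genBell φ n)) := by
  have hPhi : ∀ i, Phi φ (n + 1) i = Phi φ n i := Phi_succ_of_zero φ n h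
  rw [genBell]
  have h1 : ∀ j ∈ Finset.range (n + 2),
      C (Phi φ (n + 1) (n + 1 - j)) * Bell j = C (Phi φ n (n + 1 - j)) * Bell j := by
    intro j _; rw [hPhi]
  rw [Finset.sum_congr rfl h1, Finset.sum_range_succ']
  have h2 : Phi φ n (n + 1 - 0) = 0 := Phi_eq_zero_of_lt φ (by omega)
  rw [h2, map_zero, zero_mul, add_zero]
  rw [genBell, derivative_sum, ← Finset.sum_add_distrib, Finset.mul_sum]
  · refine Finset.sum_congr rfl fun j hj => ?_
    rw [Nat.succ_sub_succ, derivative_C_mul]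
    show C (Phi φ n (n - j)) * Bell (j + 1) = _

    rw [show Bell (j + 1) = X * (Bell j + derivative (Bell j)) from rfl]
    ring

lemma exists_root_of_monic_odd (p : ℝ[X]) (hm : p.Monic) (hodd : Odd p.natDegree) :
    ∃ x, p.eval x = 0 := by
  have hnpos : 0 < p.natDegree := hodd.pos
  have hdeg : 0 < p.degree := natDegree_pos_iff_degree_pos.1 hnpos
  have htop : Filter.Tendsto (fun x => p.eval x) Filter.atTop Filter.atTop :=
    tendsto_atTop_of_leadingCoeff_nonneg p hdeg (by rw [hm.leadingCoeff]; exact zero_le_one)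
  set q : ℝ[X] := p.comp (-X) with hq
  have hnq : (-X : ℝ[X]).natDegree = 1 := by rw [natDegree_neg, natDegree_X]
  have hqdeg : q.natDegree = p.natDegree := by
    rw [hq, natDegree_comp, hnq, mul_one]
  have hqlead : q.leadingCoeff = -1 := by
    rw [hq, leadingCoeff_comp (by rw [hnq]; exact one_ne_zero), hm.leadingCoeff, one_mul]
    rw [leadingCoeff_neg, leadingCoeff_X]
    exact hodd.neg_one_pow
  have hbot : Filter.Tendsto (fun x => q.eval x) Filter.atTop Filter.atBot :=
    tendsto_atBot_of_leadingCoeff_nonpos q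
      (natDegree_pos_iff_degree_pos.1 (hqdeg ▸ hnpos)) (by rw [hqlead]; norm_num)
  obtain ⟨y, hy⟩ := (hbot.eventually (Filter.eventually_lt_atBot 0)).exists
  have hay : p.eval (-y) < 0 := by
    rwa [hq, eval_comp, eval_neg, eval_X] at hy
  obtain ⟨b, hb1, hb2⟩ :=
    ((htop.eventually_ge_atTop 0).and (Filter.eventually_ge_atTop (-y))).exists
  obtain ⟨c, _, hc⟩ := intermediate_value_Icc hb2 p.continuousOn
    (Set.mem_Icc.2 ⟨hay.le, hb1⟩)
  exact ⟨c, hc⟩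

/-- if `φ_i = 0` for `i ≥ K+1` then for every `n ≥ K` the number of real
zeros of `Be_n^φ` (with multiplicity) is at least `n−K+1` if `K` is odd, and at least
`n−K` if `K` is even. -/
theorem genBell_count_real_roots (K : ℕ) (hK : 1 ≤ K) (φ : ℕ → ℝ)
    (hφ : ∀ i, K + 1 ≤ i → φ i = 0) (n : ℕ) (hn : K ≤ n) :
    (Odd K → n - K + 1 ≤ (genBell φ n).roots.card) ∧
    (Even K → n - K ≤ (genBell φ n).roots.card) := by
  have hPne : ∀ m, genBell φ m ≠ 0 := fun m => (genBell_monic_natDegree φ m).1.ne_zero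
  have step : ∀ m, K ≤ m →
      Multiset.card (genBell φ m).roots + 1 ≤ Multiset.card (genBell φ (m + 1)).roots := by
    intro m hm
    have hzero : φ (m + 1) = 0 := hφ _ (by omega)
    rw [genBell_succ_of_zero φ m hzero]
    have hsne : genBell φ m + derivative (genBell φ m) ≠ 0 :=
      add_derivative_ne_zero (hPne m)
    rw [roots_mul (mul_ne_zero X_ne_zero hsne), roots_X, Multiset.card_add,
      Multiset.card_singleton]
    have := card_roots_le_add_derivative (genBell φ m) (hPne m)
    omega
  have mono : ∀ m, K ≤ m →
      Multiset.card (genBell φ K).roots + (m - K) ≤ Multiset.card (genBell φ m).roots := by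
    intro m hm
    induction m, hm using Nat.le_induction with
    | base => simp
    | succ m hm ih =>
      have := step m hm
      omega
  constructor
  · intro hodd
    obtain ⟨x, hx⟩ := exists_root_of_monic_odd _ (genBell_monic_natDegree φ K).1
      (by rw [(genBell_monic_natDegree φ K).2]; exact hodd)
    have hmem : x ∈ (genBell φ K).roots := by
      rw [mem_roots (hPne K)]; exact hx
    have h1 : 0 < Multiset.card (genBell φ K).roots :=
      Multiset.card_pos_iff_exists_mem.2 ⟨x, hmem⟩
    have := mono n hn
    omega
  · intro _
    have := mono n hn
    omega
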